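/- Let (g,·) be a pre-Lie algebra over a field K of characteristic 0 with a representation (V;ρ,μ), and let T₁, T₂: V → g be compatible O-operators (every K-linear combination k₁T₁ + k₂T₂ is an O-operator) with T₂ bijective. Set N = T₁∘T₂⁻¹ and S = T₂⁻¹∘T₁. Then N∘T₁ = T₁∘S and N∘T₂ = T₂∘S, and S is a Nijenhuis operator both on the pre-Lie algebra (V, ·^{T₁}) and on the pre-Lie algebra (V, ·^{T₂}), where u ·^{T_i} v = ρ(T_i(u))v + μ(T_i(v))u, i.e. S(u) ·^{T_i} S(v) = S(S(u) ·^{T_i} v + u ·^{T_i} S(v) − S(u ·^{T_i} v)) for all u,v ∈ V and i = 1,2. -/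
import Mathlib


/-- The product `u ·^T v := ρ(T u) v + μ(T v) u` on `V` associated to a linear map
`T : V → g` and a pair of linear maps `ρ, μ : g → End(V)`. -/
def oProd {K g V : Type*} [Field K] [AddCommGroup g] [Module K g]
    [AddCommGroup V] [Module K V]
    (ρ μ : g →ₗ[K] Module.End K V) (T : V →ₗ[K] g) (u v : V) : V :=
  ρ (T u) v + μ (T v) u

/-- If `T₁, T₂` are compatible O-operators on a pre-Lie algebra `(g,·)`
associated to `(V; ρ, μ)` with `T₂` bijective, and `N = T₁ ∘ T₂⁻¹` (i.e. `N ∘ T₂ = T₁`),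
`S = T₂⁻¹ ∘ T₁` (i.e. `T₂ ∘ S = T₁`), then `N ∘ T₁ = T₁ ∘ S`, `N ∘ T₂ = T₂ ∘ S`, and `S`
is a Nijenhuis operator on both pre-Lie algebras `(V, ·^{T₁})` and `(V, ·^{T₂})`. -/
theorem compatible_oOperators_intertwining_and_nijenhuis {K : Type*} [Field K] [CharZero K]
    {g V : Type*} [AddCommGroup g] [Module K g] [AddCommGroup V] [Module K V]
    (mul : g →ₗ[K] g →ₗ[K] g)
    (hpre : ∀ x y z : g,
      mul (mul x y) z - mul x (mul y z) = mul (mul y x) z - mul y (mul x z))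
    (ρ μ : g →ₗ[K] Module.End K V)
    (hrep₁ : ∀ x y : g, ρ (mul x y - mul y x) = ρ x * ρ y - ρ y * ρ x)
    (hrep₂ : ∀ x y : g, ρ x * μ y - μ y * ρ x = μ (mul x y) - μ y * μ x)
    (T₁ T₂ : V →ₗ[K] g)
    (hT₁ : ∀ u v : V, mul (T₁ u) (T₁ v) = T₁ (oProd ρ μ T₁ u v))
    (hT₂ : ∀ u v : V, mul (T₂ u) (T₂ v) = T₂ (oProd ρ μ T₂ u v))
    (hcompat : ∀ k₁ k₂ : K, ∀ u v : V,
      mul ((k₁ • T₁ + k₂ • T₂) u) ((k₁ • T₁ + k₂ • T₂) v)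
        = (k₁ • T₁ + k₂ • T₂) (oProd ρ μ (k₁ • T₁ + k₂ • T₂) u v))
    (hbij : Function.Bijective T₂)
    (N : g →ₗ[K] g) (hN : ∀ u : V, N (T₂ u) = T₁ u)
    (S : V →ₗ[K] V) (hS : ∀ u : V, T₂ (S u) = T₁ u) :
    (∀ u : V, N (T₁ u) = T₁ (S u)) ∧
    (∀ u : V, N (T₂ u) = T₂ (S u)) ∧
    (∀ u v : V,
      oProd ρ μ T₁ (S u) (S v)
        = S (oProd ρ μ T₁ (S u) v + oProd ρ μ T₁ u (S v) - S (oProd ρ μ T₁ u v))) ∧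
    (∀ u v : V,
      oProd ρ μ T₂ (S u) (S v)
        = S (oProd ρ μ T₂ (S u) v + oProd ρ μ T₂ u (S v) - S (oProd ρ μ T₂ u v))) := by
  obtain ⟨inj, -⟩ := hbij
  -- Mixed compatibility identity from hcompat at (1,1)
  have hM : ∀ u v : V, mul (T₁ u) (T₂ v) + mul (T₂ u) (T₁ v)
      = T₁ (oProd ρ μ T₂ u v) + T₂ (oProd ρ μ T₁ u v) := by
    intro u v
    have h := hcompat 1 1 u v
    have h1 := hT₁ u v
    have h2 := hT₂ u v
    simp only [one_smul, LinearMap.add_apply, oProd, map_add] at h h1 h2 ⊢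
    linear_combination (norm := abel) h - h1 - h2
  -- Key lemma A: S intertwines the T₂-product
  have hA : ∀ u v : V, S (ρ (T₂ u) v + μ (T₂ v) u)
      = ρ (T₂ u) (S v) + μ (T₂ v) (S u) := by
    intro u v
    apply inj
    rw [hS]
    have m := hM u v
    have e1 := hT₂ (S u) v
    have e2 := hT₂ u (S v)
    simp only [oProd, hS, map_add] at m e1 e2 ⊢
    linear_combination (norm := abel) e1 + e2 - m
  -- Key lemma A₁: S intertwines the T₁-product
  have hA1 : ∀ u v : V, S (ρ (T₁ u) v + μ (T₁ v) u)
      = ρ (T₁ u) (S v) + μ (T₁ v) (S u) := by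
    intro u v
    apply inj
    rw [hS]
    have m := hM (S u) v
    have f1 := hT₁ u v
    have f2 := hT₂ (S (S u)) v
    have f3 := congrArg T₂ (hA (S u) v)
    simp only [oProd, hS, map_add] at m f1 f2 f3 ⊢
    linear_combination (norm := abel) m - f1 - f2 + f3
  -- Identity C
  have hC : ∀ u v : V, S (μ (T₂ v) (S u)) - μ (T₂ v) (S (S u))
      = S (μ (T₁ v) u) - μ (T₁ v) (S u) := by
    intro u v
    have a := hA (S u) v
    have b := hA1 u v
    simp only [hS, map_add] at a b
    linear_combination (norm := abel) a - b
  refine ⟨fun u => by rw [← hS u, hN], fun u => (hN u).trans (hS u).symm, ?_, ?_⟩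
  · -- Nijenhuis for T₁
    intro u v
    have a1 := hA1 u v
    have sa1 := congrArg S (hA1 u v)
    have a1s := hA1 (S u) v
    have c := hC u (S v)
    simp only [oProd, hS, map_add, map_sub] at a1 sa1 a1s c ⊢
    linear_combination (norm := abel) sa1 - a1s + c
  · -- Nijenhuis for T₂
    intro u v
    have a1 := hA1 u v
    have sa := congrArg S (hA u v)
    simp only [oProd, hS, map_add, map_sub] at a1 sa ⊢
    linear_combination (norm := abel) sa - a1
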